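/- Let L_1, L_2, L_3, L_4 be 2-dimensional subspaces of ℂ⁴ that are pairwise transverse (L_i ∩ L_j = 0 for i ≠ j) and suppose furthermore that the instance is generic in the sense that the associated quadratic equation has two distinct roots. Identify 2-planes H meeting L_1, L_2, L_3 nontrivially with points of the quadric surface (second ruling). Then, assuming ℂ⁴ = L_1 ⊕ L_2 with projections p_1, p_2, the set of 2-planes H with dim(H ∩ L_i) ≥ 1 for i = 1,2,3 is exactly { span(p_1(v), p_2(v)) : v ∈ L_3, v ≠ 0 }, and this set is parametrized by the projective line ℙ(L_3). -/

import Mathlib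

/-!
A plane `H` meeting `L₁` and `L₂` nontrivially is spanned by a nonzero `a ∈ H ∩ L₁` and a
nonzero `b ∈ H ∩ L₂`. If `v ≠ 0` lies in `H ∩ L₃`, write `v = α a + β b`; uniqueness of the
decomposition along `L₁ ⊕ L₂` gives `p₁ v = α a` and `p₂ v = β b`, both nonzero because `L₃` is
transverse to `L₁` and `L₂`, so `H = span(p₁ v, p₂ v)`. Conversely, if `w ∈ L₃` lies in
`span(p₁ v, p₂ v)`, say `w = α p₁ v + β p₂ v`, then `w - α v = (β - α) p₂ v ∈ L₂ ∩ L₃ = 0`, which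
shows that the plane determines `v` up to a scalar.
-/

open Module Submodule

section

variable {K V : Type*} [Field K] [AddCommGroup V] [Module K V]

theorem exists_mem_ne_zero_of_one_le_finrank {S : Submodule K V} (h : 1 ≤ finrank K S) :
    ∃ x ∈ S, x ≠ 0 := by
  have := Module.finite_of_finrank_pos h
  exact S.ne_bot_iff.mp (one_le_finrank_iff.mp h)

theorem one_le_finrank_inf_of_mem {H L : Submodule K V} [FiniteDimensional K H] {x : V}
    (hxH : x ∈ H) (hxL : x ∈ L) (hx : x ≠ 0) : 1 ≤ finrank K ↥(H ⊓ L) :=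
  one_le_finrank_iff.mpr ((H ⊓ L).ne_bot_iff.mpr ⟨x, ⟨hxH, hxL⟩, hx⟩)

theorem finrank_span_pair_of_disjoint {L₁ L₂ : Submodule K V} (h : Disjoint L₁ L₂) {a b : V}
    (ha : a ∈ L₁) (hb : b ∈ L₂) (ha0 : a ≠ 0) (hb0 : b ≠ 0) :
    finrank K (span K {a, b}) = 2 := by
  have hinf : K ∙ a ⊓ K ∙ b = ⊥ :=
    disjoint_iff.mp (h.mono ((span_singleton_le_iff_mem _ _).mpr ha)
      ((span_singleton_le_iff_mem _ _).mpr hb))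
  have := finrank_sup_add_finrank_inf_eq (K ∙ a) (K ∙ b)
  rw [hinf, finrank_bot, finrank_span_singleton ha0, finrank_span_singleton hb0] at this
  rw [span_insert]
  omega

theorem span_smul_pair {c : K} (hc : c ≠ 0) (a b : V) :
    span K {c • a, c • b} = span K {a, b} := by
  rw [← Set.smul_set_singleton, ← Set.smul_set_insert, span_smul_eq_of_isUnit _ _ hc.isUnit]

variable {L₁ L₂ L : Submodule K V} {p₁ p₂ : V →ₗ[K] V}

theorem mem_span_apply_pair (hsum : ∀ x, p₁ x + p₂ x = x) (v : V) :
    v ∈ span K {p₁ v, p₂ v} :=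
  mem_span_pair.mpr ⟨1, 1, by rw [one_smul, one_smul, hsum]⟩

theorem apply_ne_zero_of_disjoint (hsum : ∀ x, p₁ x + p₂ x = x) (hp₂ : ∀ x, p₂ x ∈ L₂)
    (h : Disjoint L₂ L) {v : V} (hv : v ∈ L) (hv0 : v ≠ 0) : p₁ v ≠ 0 := by
  intro h0
  have hv₂ : p₂ v = v := by simpa [h0] using hsum v
  exact hv0 (disjoint_def.mp h v (hv₂ ▸ hp₂ v) hv)

theorem apply_add_eq_of_disjoint (h : Disjoint L₁ L₂) (hp₁ : ∀ x, p₁ x ∈ L₁)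
    (hp₂ : ∀ x, p₂ x ∈ L₂) (hsum : ∀ x, p₁ x + p₂ x = x) {a b : V} (ha : a ∈ L₁) (hb : b ∈ L₂) :
    p₁ (a + b) = a ∧ p₂ (a + b) = b := by
  have hswap : p₁ (a + b) - a = b - p₂ (a + b) := by
    rw [sub_eq_sub_iff_add_eq_add, hsum, add_comm]
  have h₁ : p₁ (a + b) - a = 0 :=
    disjoint_def.mp h _ (sub_mem (hp₁ _) ha) (hswap ▸ sub_mem hb (hp₂ _))
  exact ⟨sub_eq_zero.mp h₁, (sub_eq_zero.mp (hswap ▸ h₁)).symm⟩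

theorem span_apply_pair_le (h : Disjoint L₁ L₂) (hp₁ : ∀ x, p₁ x ∈ L₁)
    (hp₂ : ∀ x, p₂ x ∈ L₂) (hsum : ∀ x, p₁ x + p₂ x = x) {a b v : V} (ha : a ∈ L₁) (hb : b ∈ L₂)
    (hv : v ∈ span K {a, b}) : span K {p₁ v, p₂ v} ≤ span K {a, b} := by
  obtain ⟨α, β, rfl⟩ := mem_span_pair.mp hv
  obtain ⟨h₁, h₂⟩ := apply_add_eq_of_disjoint h hp₁ hp₂ hsum (L₁.smul_mem α ha) (L₂.smul_mem β hb)
  rw [h₁, h₂, span_le]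
  exact Set.insert_subset (smul_mem _ α (subset_span (by simp)))
    (Set.singleton_subset_iff.mpr (smul_mem _ β (subset_span (by simp))))

theorem eq_span_apply_pair_of_finrank_eq_two (h : Disjoint L₁ L₂) (hp₁ : ∀ x, p₁ x ∈ L₁)
    (hp₂ : ∀ x, p₂ x ∈ L₂) (hsum : ∀ x, p₁ x + p₂ x = x) {H : Submodule K V}
    (hH : finrank K H = 2) {a b v : V} (ha : a ∈ H ⊓ L₁) (hb : b ∈ H ⊓ L₂) (ha0 : a ≠ 0)
    (hb0 : b ≠ 0) (hv : v ∈ H) (hrank : finrank K (span K {p₁ v, p₂ v}) = 2) :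
    H = span K {p₁ v, p₂ v} := by
  have := Module.finite_of_finrank_pos (hH ▸ two_pos : 0 < finrank K H)
  have hab : span K {a, b} = H :=
    eq_of_le_of_finrank_eq (span_le.mpr (Set.pair_subset ha.1 hb.1))
      (by rw [finrank_span_pair_of_disjoint h ha.2 hb.2 ha0 hb0, hH])
  rw [← hab] at hv
  have hle := hab ▸ span_apply_pair_le h hp₁ hp₂ hsum ha.2 hb.2 hv
  exact (eq_of_le_of_finrank_eq hle (by rw [hrank, hH])).symm

theorem exists_eq_smul_of_mem_span_apply_pair (hp₂ : ∀ x, p₂ x ∈ L₂)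
    (hsum : ∀ x, p₁ x + p₂ x = x) (h : Disjoint L₂ L) {v w : V} (hv : v ∈ L) (hw : w ∈ L)
    (hwv : w ∈ span K {p₁ v, p₂ v}) : ∃ c : K, w = c • v := by
  obtain ⟨α, β, rfl⟩ := mem_span_pair.mp hwv
  have hdiff : α • p₁ v + β • p₂ v - α • v = (β - α) • p₂ v := by
    linear_combination (norm := module) α • hsum v
  have hzero := disjoint_def.mp h _ (L₂.smul_mem _ (hp₂ v)) (hdiff ▸ sub_mem hw (L.smul_mem α hv))
  exact ⟨α, sub_eq_zero.mp (hdiff.trans hzero)⟩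

end

theorem second_ruling_parametrization_general
    (L₁ L₂ L₃ : Submodule ℂ (Fin 4 → ℂ))
    (h12 : L₁ ⊓ L₂ = ⊥) (h13 : L₁ ⊓ L₃ = ⊥) (h23 : L₂ ⊓ L₃ = ⊥)
    (p₁ p₂ : (Fin 4 → ℂ) →ₗ[ℂ] (Fin 4 → ℂ))
    (hp₁ : ∀ x, p₁ x ∈ L₁) (hp₂ : ∀ x, p₂ x ∈ L₂) (hsum : ∀ x, p₁ x + p₂ x = x) :
    ({H : Submodule ℂ (Fin 4 → ℂ) | finrank ℂ H = 2 ∧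
        1 ≤ finrank ℂ (H ⊓ L₁ : Submodule ℂ (Fin 4 → ℂ)) ∧
        1 ≤ finrank ℂ (H ⊓ L₂ : Submodule ℂ (Fin 4 → ℂ)) ∧
        1 ≤ finrank ℂ (H ⊓ L₃ : Submodule ℂ (Fin 4 → ℂ))} =
      {H | ∃ v : Fin 4 → ℂ, v ∈ L₃ ∧ v ≠ 0 ∧ H = Submodule.span ℂ {p₁ v, p₂ v}}) ∧
    (∀ v w : Fin 4 → ℂ, v ∈ L₃ → v ≠ 0 → w ∈ L₃ → w ≠ 0 →
      ((Submodule.span ℂ {p₁ v, p₂ v} : Submodule ℂ (Fin 4 → ℂ)) =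
          Submodule.span ℂ {p₁ w, p₂ w} ↔ ∃ c : ℂ, c ≠ 0 ∧ w = c • v)) := by
  have h12 := disjoint_iff.mpr h12
  have h13 := disjoint_iff.mpr h13
  have h23 := disjoint_iff.mpr h23
  have hp₁ne {v} (hv : v ∈ L₃) (hv0 : v ≠ 0) : p₁ v ≠ 0 :=
    apply_ne_zero_of_disjoint hsum hp₂ h23 hv hv0
  have hp₂ne {v} (hv : v ∈ L₃) (hv0 : v ≠ 0) : p₂ v ≠ 0 :=
    apply_ne_zero_of_disjoint (fun x => (add_comm _ _).trans (hsum x)) hp₁ h13 hv hv0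
  have hrank {v} (hv : v ∈ L₃) (hv0 : v ≠ 0) : finrank ℂ (span ℂ {p₁ v, p₂ v}) = 2 :=
    finrank_span_pair_of_disjoint h12 (hp₁ v) (hp₂ v) (hp₁ne hv hv0) (hp₂ne hv hv0)
  refine ⟨Set.ext fun H => ⟨?_, ?_⟩, fun v w hv hv0 hw hw0 => ⟨fun hvw => ?_, ?_⟩⟩
  · rintro ⟨hH, hH₁, hH₂, hH₃⟩
    obtain ⟨a, ha, ha0⟩ := exists_mem_ne_zero_of_one_le_finrank hH₁
    obtain ⟨b, hb, hb0⟩ := exists_mem_ne_zero_of_one_le_finrank hH₂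
    obtain ⟨v, hv, hv0⟩ := exists_mem_ne_zero_of_one_le_finrank hH₃
    exact ⟨v, hv.2, hv0, eq_span_apply_pair_of_finrank_eq_two h12 hp₁ hp₂ hsum hH ha hb ha0 hb0
      hv.1 (hrank hv.2 hv0)⟩
  · rintro ⟨v, hv, hv0, rfl⟩
    have := Module.Finite.span_of_finite ℂ (Set.toFinite {p₁ v, p₂ v})
    exact ⟨hrank hv hv0,
      one_le_finrank_inf_of_mem (subset_span (by simp)) (hp₁ v) (hp₁ne hv hv0),
      one_le_finrank_inf_of_mem (subset_span (by simp)) (hp₂ v) (hp₂ne hv hv0),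
      one_le_finrank_inf_of_mem (mem_span_apply_pair hsum v) hv hv0⟩
  · obtain ⟨c, rfl⟩ := exists_eq_smul_of_mem_span_apply_pair hp₂ hsum h23 hv hw
      (hvw ▸ mem_span_apply_pair hsum w)
    exact ⟨c, by rintro rfl; simp at hw0, rfl⟩
  · rintro ⟨c, hc, rfl⟩
    rw [map_smul, map_smul, span_smul_pair hc]

/-- with L₁, L₂, L₃ pairwise transverse 2-planes in ℂ⁴ and
p₁, p₂ the projections of ℂ⁴ = L₁ ⊕ L₂, the set of 2-planes H meeting L₁, L₂, L₃
nontrivially is exactly { span(p₁ v, p₂ v) : 0 ≠ v ∈ L₃ }, and this family is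
parametrized by the projective line ℙ(L₃): two nonzero vectors of L₃ give the
same plane iff they are proportional. -/
theorem second_ruling_parametrization
    (L₁ L₂ L₃ : Submodule ℂ (Fin 4 → ℂ))
    (hL₁ : finrank ℂ L₁ = 2) (hL₂ : finrank ℂ L₂ = 2) (hL₃ : finrank ℂ L₃ = 2)
    (h12 : L₁ ⊓ L₂ = ⊥) (h13 : L₁ ⊓ L₃ = ⊥) (h23 : L₂ ⊓ L₃ = ⊥)
    (p₁ p₂ : (Fin 4 → ℂ) →ₗ[ℂ] (Fin 4 → ℂ))
    (hp₁ : ∀ x, p₁ x ∈ L₁) (hp₂ : ∀ x, p₂ x ∈ L₂) (hsum : ∀ x, p₁ x + p₂ x = x) :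
    ({H : Submodule ℂ (Fin 4 → ℂ) | finrank ℂ H = 2 ∧
        1 ≤ finrank ℂ (H ⊓ L₁ : Submodule ℂ (Fin 4 → ℂ)) ∧
        1 ≤ finrank ℂ (H ⊓ L₂ : Submodule ℂ (Fin 4 → ℂ)) ∧
        1 ≤ finrank ℂ (H ⊓ L₃ : Submodule ℂ (Fin 4 → ℂ))} =
      {H | ∃ v : Fin 4 → ℂ, v ∈ L₃ ∧ v ≠ 0 ∧ H = Submodule.span ℂ {p₁ v, p₂ v}}) ∧
    (∀ v w : Fin 4 → ℂ, v ∈ L₃ → v ≠ 0 → w ∈ L₃ → w ≠ 0 →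
      ((Submodule.span ℂ {p₁ v, p₂ v} : Submodule ℂ (Fin 4 → ℂ)) =
          Submodule.span ℂ {p₁ w, p₂ w} ↔ ∃ c : ℂ, c ≠ 0 ∧ w = c • v)) :=
  second_ruling_parametrization_general L₁ L₂ L₃ h12 h13 h23 p₁ p₂ hp₁ hp₂ hsum
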